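/- For the channel with rows f and uniform on GF(2)ⁿ, the mutual information with input probability p₀ on x=0 satisfies I(X;Y) = (p₀ - p₀²)/(2 log 2) · ∑_{m≠0} f̂(m)² + error, where the error is O(2^{2n} ∑_i |u_i|³) uniformly in p₀ ∈ [0,1], when f(i) = 2^{-n} + u_i with 2ⁿ|u_i| ≤ 1/2 for all i. In particular the capacity is approximately ∑_{m≠0} f̂(m)²/(8 log 2), attained at p₀ = 1/2. -/

import Mathlib

open Finset

/-- The `(-1)^{⟨i,j⟩}` sign, where `⟨i,j⟩` is the GF(2) inner product. -/
noncomputable def walshChar {n : ℕ} (i j : Fin n → ZMod 2) : ℝ :=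
  (-1 : ℝ) ^ ((∑ k, i k * j k : ZMod 2)).val

/-- Walsh transform of `f : GF(2)ⁿ → ℝ`. -/
noncomputable def walsh {n : ℕ} (f : (Fin n → ZMod 2) → ℝ) (i : Fin n → ZMod 2) : ℝ :=
  ∑ j, walshChar i j * f j

/-- Base-2 Shannon entropy of a distribution on GF(2)ⁿ (with `0 log 0 = 0`,
as guaranteed by `Real.logb`'s junk value `logb 2 0 = 0`). -/
noncomputable def shannonEnt {n : ℕ} (f : (Fin n → ZMod 2) → ℝ) : ℝ :=
  -∑ i, f i * Real.logb 2 (f i)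

/-!
Write `φ = negMulLog` and `y = 2⁻ⁿ`. Then `I(X;Y) · log 2` is the sum over `i` of the concavity
defects `φ(p₀(y + uᵢ) + (1 - p₀)y) - p₀ φ(y + uᵢ) - (1 - p₀) φ(y)`. Since `φ(s y) = y φ(s) + s φ(y)`
and a concavity defect kills affine terms, each defect equals `y (φ(1 + p₀t) - p₀ φ(1 + t))` with
`t = uᵢ / y`, and `φ(1 + t) = -t - t²/2 + O(|t|³)` turns this into `y (p₀ - p₀²) t²/2 + O(y |t|³)`.
Finally Parseval together with `f̂(0) = ∑ f = 1` gives `∑_{m ≠ 0} f̂(m)² = 2ⁿ ∑ uᵢ²`.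
-/

open Real

lemma neg_one_pow_val_add {R : Type*} [Ring R] (a b : ZMod 2) :
    (-1 : R) ^ (a + b).val = (-1) ^ a.val * (-1) ^ b.val := by
  rw [ZMod.val_add, ← neg_one_pow_eq_pow_mod_two, pow_add]

section Walsh

variable {n : ℕ}

lemma card_fun_zmod_two : Fintype.card (Fin n → ZMod 2) = 2 ^ n := by
  simp

lemma walshChar_comm (i j : Fin n → ZMod 2) : walshChar i j = walshChar j i := by
  simp only [walshChar, mul_comm (i _)]

lemma walshChar_add_right (i j j' : Fin n → ZMod 2) :
    walshChar i (j + j') = walshChar i j * walshChar i j' := by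
  simp only [walshChar, Pi.add_apply, mul_add, sum_add_distrib, neg_one_pow_val_add]

lemma walshChar_zero_left (j : Fin n → ZMod 2) : walshChar 0 j = 1 := by
  simp [walshChar]

lemma walshChar_single (i : Fin n → ZMod 2) (k : Fin n) :
    walshChar i (Pi.single k 1) = (-1) ^ (i k).val := by
  simp [walshChar, Pi.single_apply]

noncomputable def walshAddChar (i : Fin n → ZMod 2) : AddChar (Fin n → ZMod 2) ℝ where
  toFun := walshChar i
  map_zero_eq_one' := by rw [walshChar_comm, walshChar_zero_left]
  map_add_eq_mul' := walshChar_add_right i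

lemma walshAddChar_apply (i j : Fin n → ZMod 2) : walshAddChar i j = walshChar i j := rfl

lemma walshAddChar_eq_zero_iff (i : Fin n → ZMod 2) : walshAddChar i = 0 ↔ i = 0 := by
  refine ⟨fun h => funext fun k => ?_, fun h => ?_⟩
  · have hk := DFunLike.congr_fun h (Pi.single k 1)
    rw [AddChar.zero_apply, walshAddChar_apply, walshChar_single] at hk
    rcases (by decide : ∀ z : ZMod 2, z = 0 ∨ z = 1) (i k) with h0 | h1
    · exact h0
    · rw [h1, show (1 : ZMod 2).val = 1 from rfl] at hk
      norm_num at hk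
  · ext j
    simp [walshAddChar, h, walshChar_zero_left]

lemma sum_walshChar (i : Fin n → ZMod 2) :
    ∑ j, walshChar i j = if i = 0 then 2 ^ n else 0 := by
  simpa [walshAddChar_apply, walshAddChar_eq_zero_iff, card_fun_zmod_two] using
    (walshAddChar i).sum_eq_ite

lemma sum_walshChar_mul_walshChar (j j' : Fin n → ZMod 2) :
    ∑ i, walshChar i j * walshChar i j' = if j = j' then 2 ^ n else 0 := by
  have hchar (i : Fin n → ZMod 2) : walshChar i j * walshChar i j' = walshChar (j + j') i := by
    rw [← walshChar_add_right, walshChar_comm]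
  have hzero : j + j' = 0 ↔ j = j' := by
    rw [add_eq_zero_iff_eq_neg, show -j' = j' from funext fun k => ZMod.neg_eq_self_mod_two _]
  simp only [hchar, sum_walshChar, hzero]

lemma sum_walsh_sq (f : (Fin n → ZMod 2) → ℝ) :
    ∑ i, walsh f i ^ 2 = 2 ^ n * ∑ j, f j ^ 2 := by
  calc ∑ i, walsh f i ^ 2
      = ∑ j, ∑ j', f j * f j' * ∑ i, walshChar i j * walshChar i j' := by
        simp only [walsh, sq, sum_mul, mul_sum]
        rw [sum_comm]
        refine sum_congr rfl fun j _ => ?_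
        rw [sum_comm]
        refine sum_congr rfl fun j' _ => sum_congr rfl fun i _ => by ring
    _ = 2 ^ n * ∑ j, f j ^ 2 := by
        simp [sum_walshChar_mul_walshChar, mul_sum, sq, mul_comm]

lemma walsh_zero (f : (Fin n → ZMod 2) → ℝ) : walsh f 0 = ∑ j, f j := by
  simp [walsh, walshChar_zero_left]

lemma sum_walsh_sq_filter_ne_zero (f : (Fin n → ZMod 2) → ℝ) :
    ∑ m ∈ univ.filter (· ≠ 0), walsh f m ^ 2 = 2 ^ n * ∑ j, f j ^ 2 - (∑ j, f j) ^ 2 := by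
  rw [filter_ne', sum_erase_eq_sub (mem_univ 0), sum_walsh_sq, walsh_zero]

lemma sum_walsh_sq_filter_ne_zero_of_eq_inv_add {f u : (Fin n → ZMod 2) → ℝ}
    (hf : ∀ i, f i = ((2 : ℝ) ^ n)⁻¹ + u i) (hu : ∑ i, u i = 0) :
    ∑ m ∈ univ.filter (· ≠ 0), walsh f m ^ 2 = 2 ^ n * ∑ i, u i ^ 2 := by
  have hN : (2 : ℝ) ^ n ≠ 0 := by positivity
  simp only [sum_walsh_sq_filter_ne_zero, hf, add_sq, sum_add_distrib, ← mul_sum, hu, sum_const,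
    card_univ, card_fun_zmod_two, nsmul_eq_mul]
  push_cast
  field_simp
  ring

end Walsh

section Entropy

variable {n : ℕ}

lemma shannonEnt_eq_sum_negMulLog (f : (Fin n → ZMod 2) → ℝ) :
    shannonEnt f = (∑ i, negMulLog (f i)) / log 2 := by
  simp only [shannonEnt, negMulLog, logb, sum_div, ← sum_neg_distrib]
  exact sum_congr rfl fun i _ => by ring

lemma shannonEnt_uniform : shannonEnt (fun _ : Fin n → ZMod 2 => ((2 : ℝ) ^ n)⁻¹) = n := by
  have hlog : log 2 ≠ 0 := (log_pos one_lt_two).ne'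
  simp [shannonEnt_eq_sum_negMulLog, negMulLog, log_inv, log_pow]
  field_simp

lemma shannonEnt_mix_sub (f : (Fin n → ZMod 2) → ℝ) (p : ℝ) :
    shannonEnt (fun i => p * f i + (1 - p) * ((2 : ℝ) ^ n)⁻¹) - (p * shannonEnt f + (1 - p) * n)
      = (∑ i, (negMulLog (p * f i + (1 - p) * ((2 : ℝ) ^ n)⁻¹) - p * negMulLog (f i)
          - (1 - p) * negMulLog ((2 : ℝ) ^ n)⁻¹)) / log 2 := by
  rw [← shannonEnt_uniform, shannonEnt_eq_sum_negMulLog, shannonEnt_eq_sum_negMulLog,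
    shannonEnt_eq_sum_negMulLog, sum_sub_distrib, sum_sub_distrib, ← mul_sum, ← mul_sum]
  ring

end Entropy

lemma Real.negMulLog_mix_sub {y : ℝ} (hy : y ≠ 0) (u p : ℝ) :
    negMulLog (p * (y + u) + (1 - p) * y) - p * negMulLog (y + u) - (1 - p) * negMulLog y
      = y * (negMulLog (1 + p * (u / y)) - p * negMulLog (1 + u / y)) := by
  have hmix : p * (y + u) + (1 - p) * y = (1 + p * (u / y)) * y := by field_simp; ring
  have hshift : y + u = (1 + u / y) * y := by field_simp
  rw [hmix, hshift, negMulLog_mul, negMulLog_mul]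
  ring

lemma Real.abs_log_one_add_sub_le {t : ℝ} (ht : |t| ≤ 1 / 2) :
    |log (1 + t) - (t - t ^ 2 / 2)| ≤ 2 * |t| ^ 3 := by
  have key := abs_log_sub_add_sum_range_le (show |-t| < 1 by rw [abs_neg]; linarith) 2
  norm_num [sum_range_succ] at key
  calc |log (1 + t) - (t - t ^ 2 / 2)| = |-t + t ^ 2 / 2 + log (1 + t)| := by congr 1; ring
    _ ≤ |t| ^ 3 / (1 - |t|) := key
    _ ≤ 2 * |t| ^ 3 := by
        rw [div_le_iff₀ (by linarith)]
        nlinarith [pow_nonneg (abs_nonneg t) 3]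

lemma Real.abs_negMulLog_one_add_add_le {t : ℝ} (ht : |t| ≤ 1 / 2) :
    |negMulLog (1 + t) + (t + t ^ 2 / 2)| ≤ 4 * |t| ^ 3 := by
  set r := log (1 + t) - (t - t ^ 2 / 2)
  have hr : |r| ≤ 2 * |t| ^ 3 := abs_log_one_add_sub_le ht
  have h1t : |1 + t| ≤ 3 / 2 := by
    rw [abs_le] at ht ⊢; constructor <;> linarith
  have hexp : negMulLog (1 + t) + (t + t ^ 2 / 2) = t ^ 3 / 2 - (1 + t) * r := by
    simp only [negMulLog, r]; ring
  calc |negMulLog (1 + t) + (t + t ^ 2 / 2)| ≤ |t ^ 3 / 2| + |(1 + t) * r| := by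
        rw [hexp]; exact abs_sub _ _
    _ ≤ |t| ^ 3 / 2 + 3 / 2 * (2 * |t| ^ 3) := by
        rw [abs_div, abs_pow, abs_mul, abs_two]
        gcongr
    _ ≤ 4 * |t| ^ 3 := by nlinarith [pow_nonneg (abs_nonneg t) 3]

lemma Real.abs_negMulLog_mix_sub_le {t p : ℝ} (ht : |t| ≤ 1 / 2) (hp₀ : 0 ≤ p) (hp₁ : p ≤ 1) :
    |negMulLog (1 + p * t) - p * negMulLog (1 + t) - (p - p ^ 2) * t ^ 2 / 2| ≤ 8 * |t| ^ 3 := by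
  have hpt : |p * t| ≤ |t| := by
    rw [abs_mul, abs_of_nonneg hp₀]; exact mul_le_of_le_one_left (abs_nonneg t) hp₁
  have hexp : negMulLog (1 + p * t) - p * negMulLog (1 + t) - (p - p ^ 2) * t ^ 2 / 2
      = (negMulLog (1 + p * t) + (p * t + (p * t) ^ 2 / 2))
        - p * (negMulLog (1 + t) + (t + t ^ 2 / 2)) := by ring
  calc _ ≤ |negMulLog (1 + p * t) + (p * t + (p * t) ^ 2 / 2)|
        + |p * (negMulLog (1 + t) + (t + t ^ 2 / 2))| := by rw [hexp]; exact abs_sub _ _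
    _ ≤ 4 * |p * t| ^ 3 + 1 * (4 * |t| ^ 3) := by
        rw [abs_mul p, abs_of_nonneg hp₀]
        gcongr
        · exact abs_negMulLog_one_add_add_le (hpt.trans ht)
        · exact abs_negMulLog_one_add_add_le ht
    _ ≤ 8 * |t| ^ 3 := by
        have := pow_le_pow_left₀ (abs_nonneg _) hpt 3
        linarith

lemma Real.abs_negMulLog_mix_sub_sub_le {y u p : ℝ} (hy : 0 < y) (hu : |u| ≤ y / 2)
    (hp₀ : 0 ≤ p) (hp₁ : p ≤ 1) :
    |negMulLog (p * (y + u) + (1 - p) * y) - p * negMulLog (y + u) - (1 - p) * negMulLog y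
        - (p - p ^ 2) * u ^ 2 / (2 * y)| ≤ 8 * |u| ^ 3 / y ^ 2 := by
  have ht : |u / y| ≤ 1 / 2 := by
    rw [abs_div, abs_of_pos hy, div_le_iff₀ hy]; linarith
  have hscale : (p - p ^ 2) * u ^ 2 / (2 * y) = y * ((p - p ^ 2) * (u / y) ^ 2 / 2) := by
    field_simp
  rw [negMulLog_mix_sub hy.ne', hscale, ← mul_sub, abs_mul, abs_of_pos hy]
  calc y * |_| ≤ y * (8 * |u / y| ^ 3) := by gcongr; exact abs_negMulLog_mix_sub_le ht hp₀ hp₁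
    _ = 8 * |u| ^ 3 / y ^ 2 := by rw [abs_div, abs_of_pos hy]; field_simp

/-- Mutual information of the channel with rows `f` and uniform on GF(2)ⁿ:
`I(X;Y) = H(Y) - H(Y|X)` with `H(Y|X) = p₀ H(f) + (1 - p₀) n` satisfies
`I(X;Y) = (p₀ - p₀²)/(2 log 2) · ∑_{m ≠ 0} f̂(m)² + O(2^{2n} ∑ |uᵢ|³)`,
uniformly in `p₀ ∈ [0,1]`, when `f(i) = 2⁻ⁿ + uᵢ` with `2ⁿ|uᵢ| ≤ 1/2`.
(The capacity is thus approximately `∑_{m≠0} f̂(m)²/(8 log 2)`, at `p₀ = 1/2`.) -/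
theorem channel_info_walsh (n : ℕ) :
    ∃ c : ℝ, ∀ (f u : (Fin n → ZMod 2) → ℝ) (p₀ : ℝ),
      (∀ i, f i = ((2 : ℝ) ^ n)⁻¹ + u i) →
      (∑ i, u i) = 0 →
      (∀ i, (2 : ℝ) ^ n * |u i| ≤ 1 / 2) →
      p₀ ∈ Set.Icc (0:ℝ) 1 →
      |(shannonEnt (fun i => p₀ * f i + (1 - p₀) * ((2 : ℝ) ^ n)⁻¹) -
            (p₀ * shannonEnt f + (1 - p₀) * n)) -
          (p₀ - p₀ ^ 2) / (2 * Real.log 2) *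
            ∑ m ∈ univ.filter (· ≠ (0 : Fin n → ZMod 2)), walsh f m ^ 2| ≤
        c * (2 : ℝ) ^ (2 * n) * ∑ i, |u i| ^ 3 := by
  refine ⟨8 / log 2, fun f u p₀ hf hu hsmall ⟨hp₀, hp₁⟩ => ?_⟩
  set y : ℝ := ((2 : ℝ) ^ n)⁻¹
  have hy : 0 < y := by positivity
  have hlog : 0 < log 2 := log_pos one_lt_two
  have hquad : (p₀ - p₀ ^ 2) / (2 * log 2) * (2 ^ n * ∑ i, u i ^ 2)
      = (∑ i, (p₀ - p₀ ^ 2) * u i ^ 2 / (2 * y)) / log 2 := by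
    simp only [y, ← sum_div, ← mul_sum]; field_simp
  have hu_le (i) : |u i| ≤ y / 2 := by
    have := hsmall i; simp only [y]; field_simp; linarith
  rw [shannonEnt_mix_sub, sum_walsh_sq_filter_ne_zero_of_eq_inv_add hf hu, hquad, ← sub_div,
    ← sum_sub_distrib, abs_div, abs_of_pos hlog, div_le_iff₀ hlog]
  simp only [hf]
  calc _ ≤ ∑ i, 8 * |u i| ^ 3 / y ^ 2 := (abs_sum_le_sum_abs _ _).trans <|
        sum_le_sum fun i _ => abs_negMulLog_mix_sub_sub_le hy (hu_le i) hp₀ hp₁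
    _ = (8 / log 2 * 2 ^ (2 * n) * ∑ i, |u i| ^ 3) * log 2 := by
        rw [← sum_div, ← mul_sum]; simp only [y]; field_simp; ring
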